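/- Let W be an algebraic Weyl curvature tensor on a Euclidean vector space V of dimension n ≥ 4. The symmetric part of any element of g_W lies in the kernel of W restricted to symmetric endomorphisms: if h ∈ g_W, then W(π⁺h) = 0, where π⁺ is the orthogonal projection of End(V) onto symmetric endomorphisms. -/
import Mathlib


/- Common setup: algebraic Weyl curvature tensors on a Euclidean vector space. -/

open scoped RealInnerProductSpace
open Finset

/-- A curvature-type 4-linear tensor on `V`. -/
abbrev Tensor4 (V : Type*) [NormedAddCommGroup V] [InnerProductSpace ℝ V] : Type _ :=
  V →ₗ[ℝ] V →ₗ[ℝ] V →ₗ[ℝ] V →ₗ[ℝ] ℝ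

variable {V : Type*} [NormedAddCommGroup V] [InnerProductSpace ℝ V] [FiniteDimensional ℝ V]

/-- `W` is an algebraic Weyl curvature tensor: it has the symmetries of a curvature
tensor, satisfies the first Bianchi identity, and is totally trace-free. -/
structure IsWeylTensor (W : Tensor4 V) : Prop where
  antisym₁ : ∀ x y z u, W x y z u = - W y x z u
  antisym₂ : ∀ x y z u, W x y z u = - W x y u z
  pair_symm : ∀ x y z u, W x y z u = W z u x y
  bianchi : ∀ x y z u, W x y z u + W y z x u + W z x y u = 0
  trace_free : ∀ (b : OrthonormalBasis (Fin (Module.finrank ℝ V)) ℝ V) (x y : V),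
      ∑ i, W x (b i) y (b i) = 0

/-- The extension of `W` to endomorphisms, `W(h) = Σᵢ W(eᵢ, ·, h eᵢ, ·)`,
viewed as a bilinear form (identified with an endomorphism via the metric). -/
noncomputable def weylExt {ι : Type*} [Fintype ι]
    (W : Tensor4 V) (b : OrthonormalBasis ι ℝ V) (h : V →ₗ[ℝ] V) (v w : V) : ℝ :=
  ∑ i, W (b i) v (h (b i)) w

/-- The space `E_W`: endomorphisms `h` with `W(x,y,hz,·) + W(y,z,hx,·) + W(z,x,hy,·) = 0`. -/
def memE (W : Tensor4 V) (h : V →ₗ[ℝ] V) : Prop :=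
  ∀ x y z u, W x y (h z) u + W y z (h x) u + W z x (h y) u = 0

/-- The Lie algebra `g_W` of the symmetry group of `W`. -/
def memG (W : Tensor4 V) (h : V →ₗ[ℝ] V) : Prop :=
  ∀ x y z u, W (h x) y z u + W x (h y) z u + W x y (h z) u + W x y z (h u) = 0

/-- Skew-symmetric endomorphisms (identified with 2-forms). -/
def IsSkew (F : V →ₗ[ℝ] V) : Prop := ∀ v w, ⟪F v, w⟫ = - ⟪v, F w⟫

/-- Symmetric endomorphisms. -/
def IsSym (F : V →ₗ[ℝ] V) : Prop := ∀ v w, ⟪F v, w⟫ = ⟪v, F w⟫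

/-- The bilinear form `g(F·,·)` associated to an endomorphism `F`. -/
noncomputable def form (F : V →ₗ[ℝ] V) (v w : V) : ℝ := ⟪F v, w⟫

/-- if `h ∈ g_W` then its symmetric part `π⁺h = (h + h*)/2` is annihilated
by `W` restricted to symmetric endomorphisms. -/
theorem stmt9 (hn : 4 ≤ Module.finrank ℝ V) (W : Tensor4 V) (hW : IsWeylTensor W)
    (b : OrthonormalBasis (Fin (Module.finrank ℝ V)) ℝ V)
    (h : V →ₗ[ℝ] V) (hG : memG W h) :
    ∀ v w, weylExt W b ((1 / 2 : ℝ) • (h + LinearMap.adjoint h)) v w = 0 := by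
  intro v w
  -- (i) adjoint swap
  have hadj : (∑ i, W (b i) v ((LinearMap.adjoint h) (b i)) w)
      = ∑ i, W (h (b i)) v (b i) w := by
    have lhs : ∀ i, W (b i) v ((LinearMap.adjoint h) (b i)) w
        = ∑ j, ⟪h (b j), b i⟫ * W (b i) v (b j) w := by
      intro i
      conv_lhs => rw [← b.sum_repr ((LinearMap.adjoint h) (b i))]
      simp only [map_sum, LinearMap.sum_apply, map_smul, LinearMap.smul_apply,
        smul_eq_mul, b.repr_apply_apply, LinearMap.adjoint_inner_right]
    have rhs : ∀ j, W (h (b j)) v (b j) w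
        = ∑ i, ⟪h (b j), b i⟫ * W (b i) v (b j) w := by
      intro j
      conv_lhs => rw [← b.sum_repr (h (b j))]
      simp only [map_sum, LinearMap.sum_apply, map_smul, LinearMap.smul_apply,
        smul_eq_mul, b.repr_apply_apply]
      refine Finset.sum_congr rfl fun i _ => ?_
      rw [real_inner_comm]
    simp only [lhs, rhs]
    exact Finset.sum_comm
  -- (ii) trace identity from memG
  have hsum : ∑ i, (W (h (b i)) v (b i) w + W (b i) (h v) (b i) w
      + W (b i) v (h (b i)) w + W (b i) v (b i) (h w)) = 0 := by
    apply Finset.sum_eq_zero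
    intro i _
    exact hG (b i) v (b i) w
  have t1 : ∑ i, W (b i) (h v) (b i) w = 0 := by
    have e : ∀ i, W (b i) (h v) (b i) w = W (h v) (b i) w (b i) := by
      intro i
      have h1 := hW.antisym₁ (b i) (h v) (b i) w
      have h2 := hW.antisym₂ (h v) (b i) (b i) w
      linarith
    simp only [e]
    exact hW.trace_free b (h v) w
  have t2 : ∑ i, W (b i) v (b i) (h w) = 0 := by
    have e : ∀ i, W (b i) v (b i) (h w) = W v (b i) (h w) (b i) := by
      intro i
      have h1 := hW.antisym₁ (b i) v (b i) (h w)
      have h2 := hW.antisym₂ v (b i) (b i) (h w)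
      linarith
    simp only [e]
    exact hW.trace_free b v (h w)
  rw [Finset.sum_add_distrib, Finset.sum_add_distrib, Finset.sum_add_distrib, t1, t2] at hsum
  have key : (∑ i, W (h (b i)) v (b i) w) + (∑ i, W (b i) v (h (b i)) w) = 0 := by
    linarith
  have expand : weylExt W b ((1 / 2 : ℝ) • (h + LinearMap.adjoint h)) v w
      = (1 / 2 : ℝ) * ((∑ i, W (b i) v (h (b i)) w)
        + ∑ i, W (b i) v ((LinearMap.adjoint h) (b i)) w) := by
    simp only [weylExt, LinearMap.smul_apply, LinearMap.add_apply, map_smul, map_add,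
      LinearMap.smul_apply, smul_eq_mul, LinearMap.add_apply]
    rw [← Finset.sum_add_distrib, Finset.mul_sum]
  rw [expand, hadj]
  linarith
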